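/- For every integer m ≥ 2, the graph P_m is well-covered; moreover every maximal independent set of P_m has cardinality 3. -/

import Mathlib

/-!
The vertex set of `P_m` is covered by three cliques: the even-indexed `x`'s together with `y_0`,
the odd-indexed `x`'s together with `y_1`, and `Z`. An independent set meets each of them at most
once, so it has at most three vertices. A maximal one meets all three: `z_2` has no neighbour
outside `Z`; and if `S` missed the clique of parity `p`, then `x_p ∉ S` would force some
`x_b ∈ S` outside the pair of `x_p`, and the partner of `x_b` of parity `p` would force a second
vertex of `X` in `S`, outside the pair of `x_b` and hence adjacent to `x_b`.
-/

open scoped Classical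

variable {V : Type*}

/-- `S` is an independent set of the induced subgraph of `G` on the vertex set `A`. -/
def IsIndepIn (G : SimpleGraph V) (A S : Finset V) : Prop :=
  S ⊆ A ∧ ∀ u ∈ S, ∀ v ∈ S, ¬ G.Adj u v

/-- `S` is a maximal independent set of the induced subgraph of `G` on the vertex set `A`. -/
def IsMaxIndepIn (G : SimpleGraph V) (A S : Finset V) : Prop :=
  IsIndepIn G A S ∧ ∀ T, IsIndepIn G A T → S ⊆ T → T = S

/-- The induced subgraph of `G` on the vertex set `A` is well-covered: all of its
maximal independent sets have the same cardinality. -/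
def WellCoveredOn (G : SimpleGraph V) (A : Finset V) : Prop :=
  ∀ S T, IsMaxIndepIn G A S → IsMaxIndepIn G A T → S.card = T.card

/-- The closed neighbourhood of `x` deleted from `A`: the vertices of `A` distinct from `x`
and not adjacent to `x`. -/
noncomputable def delClosedNbhd (G : SimpleGraph V) (A : Finset V) (x : V) : Finset V :=
  A.filter fun y => y ≠ x ∧ ¬ G.Adj x y

/-- The induced subgraph of `G` on the vertex set `A` is vertex decomposable: it is
well-covered, and either it has no edges, or some vertex `x ∈ A` is such that deleting `x`,
respectively the closed neighbourhood of `x`, leaves a vertex decomposable graph. -/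
def VertexDecomposableOn (G : SimpleGraph V) (A : Finset V) : Prop :=
  WellCoveredOn G A ∧
    ((∀ u ∈ A, ∀ v ∈ A, ¬ G.Adj u v) ∨
      ∃ x, ∃ _h : x ∈ A,
        VertexDecomposableOn G (A.erase x) ∧
        VertexDecomposableOn G (delClosedNbhd G A x))
termination_by A.card
decreasing_by
  · exact Finset.card_erase_lt_of_mem (by assumption)
  · exact Finset.card_lt_card
      (Finset.filter_ssubset.mpr ⟨x, by assumption, by simp⟩)

/-- A finite simple graph is well-covered if all of its maximal independent sets have the
same cardinality. -/
def WellCovered (G : SimpleGraph V) [Fintype V] : Prop :=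
  WellCoveredOn G Finset.univ

/-- A finite simple graph is vertex decomposable. -/
def VertexDecomposable (G : SimpleGraph V) [Fintype V] : Prop :=
  VertexDecomposableOn G Finset.univ

/-- The set of shedding vertices of `G` : those vertices `x` such that both `G \ x` and
`G \ N[x]` are vertex decomposable. -/
def Shed (G : SimpleGraph V) [Fintype V] : Set V :=
  {x | VertexDecomposableOn G (Finset.univ.erase x) ∧
       VertexDecomposableOn G (delClosedNbhd G Finset.univ x)}

/-- `D` is a dominating set of `G`: every vertex not in `D` is adjacent to a vertex of `D`. -/
def IsDominatingSet (G : SimpleGraph V) (D : Set V) : Prop :=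
  ∀ v, v ∉ D → ∃ u ∈ D, G.Adj u v

/-- A vertex is simplicial if its neighbourhood induces a clique. -/
def IsSimplicialVertex (G : SimpleGraph V) (x : V) : Prop :=
  ∀ u v, G.Adj x u → G.Adj x v → u ≠ v → G.Adj u v

/-- The graph `P_m` on the vertex set `X ⊕ Y ⊕ Z` with `X = Fin (2*m)`, `Y = Fin 2`,
`Z = Fin 3` (all 0-indexed, so the paper's `x_j`, `y_j`, `z_j` are indices `j - 1`).
Its edges are exactly: `X` induces the complete `m`-partite graph `K_{2,…,2}` whose
complement is the matching pairing `x_{2i}` with `x_{2i+1}`; `y_0` is adjacent to `z_0`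
and to every even-indexed vertex of `X`; `y_1` is adjacent to `z_1` and to every
odd-indexed vertex of `X`; and `Z` induces a complete graph `K_3`. -/
def Pgraph (m : ℕ) : SimpleGraph (Fin (2 * m) ⊕ Fin 2 ⊕ Fin 3) :=
  SimpleGraph.fromRel fun p q =>
    match p, q with
    | Sum.inl a, Sum.inl b => a.val / 2 ≠ b.val / 2
    | Sum.inr (Sum.inl y), Sum.inl a => a.val % 2 = y.val
    | Sum.inr (Sum.inl y), Sum.inr (Sum.inr z) => y.val = z.val
    | Sum.inr (Sum.inr z), Sum.inr (Sum.inr w) => z ≠ w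
    | _, _ => False

theorem IsMaxIndepIn.exists_adj_of_notMem {G : SimpleGraph V} {A S : Finset V}
    (hS : IsMaxIndepIn G A S) {w : V} (hwA : w ∈ A) (hwS : w ∉ S) : ∃ u ∈ S, G.Adj w u := by
  by_contra! h
  have hT : IsIndepIn G A (insert w S) := by
    refine ⟨Finset.insert_subset hwA hS.1.1, ?_⟩
    simp only [Finset.mem_insert]
    rintro u (rfl | hu) v (rfl | hv)
    · exact G.irrefl
    · exact h v hv
    · exact fun huv => h u hu huv.symm
    · exact hS.1.2 u hu v hv
  exact hwS (hS.2 _ hT (Finset.subset_insert w S) ▸ Finset.mem_insert_self w S)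

theorem IsIndepIn.card_eq_of_isClique_fiber {ι : Type*} [Fintype ι] {G : SimpleGraph V}
    {A S : Finset V} (hS : IsIndepIn G A S) (f : V → ι)
    (hclique : ∀ i, G.IsClique {v | f v = i}) (hmeet : ∀ i, ∃ v ∈ S, f v = i) :
    S.card = Fintype.card ι := by
  have hinj : Set.InjOn f S := fun u hu v hv huv => by
    by_contra hne
    exact hS.2 u hu v hv (hclique (f v) huv rfl hne)
  rw [← Finset.card_image_of_injOn hinj, ← Finset.card_univ]
  congr
  exact Finset.eq_univ_of_forall fun i => by simpa [eq_comm] using hmeet i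

namespace Pgraph

variable {m : ℕ}

open Sum

def parity (a : Fin (2 * m)) : Fin 2 := ⟨a % 2, Nat.mod_lt _ two_pos⟩

@[simp]
theorem adj_inl_inl {a b : Fin (2 * m)} :
    (Pgraph m).Adj (inl a) (inl b) ↔ a.val / 2 ≠ b.val / 2 := by
  simp only [Pgraph, SimpleGraph.fromRel_adj, ne_eq, inl.injEq]
  constructor
  · rintro ⟨-, h | h⟩ <;> omega
  · intro h; exact ⟨by rintro rfl; exact h rfl, Or.inl h⟩

@[simp]
theorem adj_inl_inr_inl {a : Fin (2 * m)} {y : Fin 2} :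
    (Pgraph m).Adj (inl a) (inr (inl y)) ↔ parity a = y := by
  simp [Pgraph, parity, Fin.ext_iff]

@[simp]
theorem adj_inr_inl_inl {a : Fin (2 * m)} {y : Fin 2} :
    (Pgraph m).Adj (inr (inl y)) (inl a) ↔ parity a = y := by
  rw [SimpleGraph.adj_comm, adj_inl_inr_inl]

@[simp]
theorem not_adj_inl_inr_inr {a : Fin (2 * m)} {z : Fin 3} :
    ¬ (Pgraph m).Adj (inl a) (inr (inr z)) := by
  simp [Pgraph]

@[simp]
theorem not_adj_inr_inr_inl {a : Fin (2 * m)} {z : Fin 3} :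
    ¬ (Pgraph m).Adj (inr (inr z)) (inl a) := by
  simp [Pgraph]

@[simp]
theorem adj_inr_inr_inr_inl {y : Fin 2} {z : Fin 3} :
    (Pgraph m).Adj (inr (inr z)) (inr (inl y)) ↔ y.val = z.val := by
  simp [Pgraph]

@[simp]
theorem adj_inr_inr_inr_inr {z w : Fin 3} :
    (Pgraph m).Adj (inr (inr z)) (inr (inr w)) ↔ z ≠ w := by
  simp only [Pgraph, SimpleGraph.fromRel_adj, ne_eq, inr.injEq]
  tauto

def cliqueIndex : Fin (2 * m) ⊕ Fin 2 ⊕ Fin 3 → Option (Fin 2)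
  | inl a => some (parity a)
  | inr (inl y) => some y
  | inr (inr _) => none

theorem isClique_cliqueIndex_fiber (i : Option (Fin 2)) :
    (Pgraph m).IsClique {v | cliqueIndex v = i} := by
  rintro (a | y | z) rfl (b | y' | w) hv hne <;>
    simp_all [cliqueIndex, parity, Fin.ext_iff]
  omega

theorem exists_mem_cliqueIndex_eq_none {S : Finset (Fin (2 * m) ⊕ Fin 2 ⊕ Fin 3)}
    (hS : IsMaxIndepIn (Pgraph m) Finset.univ S) : ∃ v ∈ S, cliqueIndex v = none := by
  by_contra! h
  obtain ⟨u, hu, hadj⟩ :=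
    hS.exists_adj_of_notMem (Finset.mem_univ (inr (inr 2))) fun h2 => h _ h2 rfl
  rcases u with a | y | z
  · simp at hadj
  · simp at hadj
    omega
  · exact h _ hu rfl

theorem exists_mem_cliqueIndex_eq_some (hm : 1 ≤ m) {S : Finset (Fin (2 * m) ⊕ Fin 2 ⊕ Fin 3)}
    (hS : IsMaxIndepIn (Pgraph m) Finset.univ S) (p : Fin 2) :
    ∃ v ∈ S, cliqueIndex v = some p := by
  by_contra! h
  have hX (a : Fin (2 * m)) (ha : parity a = p) :
      ∃ b, inl b ∈ S ∧ a.val / 2 ≠ b.val / 2 := by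
    have haS : inl a ∉ S := fun haS => h _ haS (by simp [cliqueIndex, ha])
    obtain ⟨u, hu, hadj⟩ := hS.exists_adj_of_notMem (Finset.mem_univ _) haS
    rcases u with b | y | z
    · exact ⟨b, hu, by simpa using hadj⟩
    · rw [adj_inl_inr_inl, ha] at hadj
      exact absurd (by simp [cliqueIndex, hadj]) (h _ hu)
    · simp at hadj
  have hp := p.isLt
  obtain ⟨b, hbS, -⟩ := hX ⟨p, by omega⟩ (by simp [parity, Fin.ext_iff]; omega)
  obtain ⟨b', hb'S, hbb'⟩ :=
    hX ⟨2 * (b / 2) + p, by omega⟩ (by simp [parity, Fin.ext_iff]; omega)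
  simp only at hbb'
  exact hS.1.2 _ hbS _ hb'S (by simp; omega)

theorem card_eq_three_of_isMaxIndepIn (hm : 1 ≤ m) {S : Finset (Fin (2 * m) ⊕ Fin 2 ⊕ Fin 3)}
    (hS : IsMaxIndepIn (Pgraph m) Finset.univ S) : S.card = 3 := by
  have := hS.1.card_eq_of_isClique_fiber cliqueIndex isClique_cliqueIndex_fiber fun
    | none => exists_mem_cliqueIndex_eq_none hS
    | some p => exists_mem_cliqueIndex_eq_some hm hS p
  simpa using this

end Pgraph

/-- For every `m ≥ 2`, the graph `P_m` is well-covered, and every maximal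
independent set of `P_m` has cardinality `3`. -/
theorem statement15 (m : ℕ) (hm : 2 ≤ m) :
    WellCovered (Pgraph m) ∧
    ∀ S, IsMaxIndepIn (Pgraph m) Finset.univ S → S.card = 3 := by
  have hcard := fun S => Pgraph.card_eq_three_of_isMaxIndepIn (by omega : 1 ≤ m) (S := S)
  exact ⟨fun S T hS hT => (hcard S hS).trans (hcard T hT).symm, hcard⟩
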